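/- arXiv:2204.10649 — 3 statements merged into one kernel-verified Lean document; each statement's English description precedes it below -/
import Mathlib

section
/- Let f be a probability density on [0,∞) of gamma type: f(x)/(C(x) x^α e^{-βx}) → 1 as x → ∞, where β > 0, α ∈ ℝ, and C is slowly varying, positive and locally bounded. Then the survival function F̄(x) = ∫_x^∞ f satisfies F̄(x+k)/F̄(x) → e^{-βk} as x → ∞, for every k ∈ ℝ. -/
/-!
Write `f t = exp (L t) * t ^ α * exp (-β * t)`. By the gamma-type asymptotics, `L - log C → 0`,
so `L` is slowly varying in the additive sense `L (u * s) - L u → 0`, and `L` is a.e. measurable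
because `f` is integrable. The uniform convergence theorem for slowly varying functions, whose
proof only needs measurability almost everywhere, then gives `L (t + k) - L t → 0`, that is
`f (t + k) / f t → exp (-β * k)`. Integrating the resulting two-sided bounds
`a * f t ≤ f (t + k) ≤ b * f t` over `(x, ∞)` passes the ratio limit to the survival function.
-/

open Filter Real MeasureTheory Set Topology

section UniformConvergence

variable {L : ℝ → ℝ}

theorem tendsto_volume_le_abs_sub_of_slowlyVarying (hL : AEStronglyMeasurable L volume)
    (hSV : ∀ s > 0, Tendsto (fun u => L (u * s) - L u) atTop (𝓝 0))
    {a : ℕ → ℝ} (ha : Tendsto a atTop atTop) {S : Set ℝ} (hSm : MeasurableSet S)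
    (hS : volume S ≠ ⊤) (hS0 : S ⊆ Ioi 0) {ε : ℝ} (hε : 0 < ε) :
    Tendsto (fun n => volume ({s | ε ≤ |L (a n * s) - L (a n)|} ∩ S)) atTop (𝓝 0) := by
  have : IsFiniteMeasure (volume.restrict S) := isFiniteMeasure_restrict.2 hS
  have hmeas : ∀ n,
      AEStronglyMeasurable (fun s => L (a n * s) - L (a n)) (volume.restrict S) := by
    intro n
    refine (AEStronglyMeasurable.sub ?_ aestronglyMeasurable_const).restrict
    rcases eq_or_ne (a n) 0 with h | h
    · simp only [h, zero_mul]
      exact aestronglyMeasurable_const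
    · exact hL.comp_quasiMeasurePreserving (Measure.quasiMeasurePreserving_smul volume h)
  have hae : ∀ᵐ s ∂volume.restrict S,
      Tendsto (fun n => L (a n * s) - L (a n)) atTop (𝓝 0) :=
    (ae_restrict_iff' hSm).2 (ae_of_all _ fun s hs => (hSV s (hS0 hs)).comp ha)
  have hconv := tendstoInMeasure_iff_dist.1 (tendstoInMeasure_of_tendsto_ae hmeas hae) ε hε
  simp only [dist_zero_right, Real.norm_eq_abs] at hconv
  exact tendsto_of_tendsto_of_tendsto_of_le_of_le tendsto_const_nhds hconv (fun _ => bot_le)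
    fun _ => Measure.le_restrict_apply _ _

theorem exists_mem_Icc_notMem_of_volume_lt {A B : Set ℝ} {r : ℝ} (hr : 1 / 2 ≤ r)
    (hA : volume A < 1 / 2) (hB : volume B < 1 / 4) :
    ∃ s ∈ Icc (1 : ℝ) 2, s ∉ A ∧ r * s ∉ B := by
  have hr_inv : ENNReal.ofReal |r⁻¹| ≤ 2 := by
    rw [abs_of_pos (by positivity), ← ENNReal.ofReal_ofNat 2]
    exact ENNReal.ofReal_le_ofReal ((inv_le_comm₀ (by positivity) two_pos).2 (by linarith))
  have hP : volume ((r * ·) ⁻¹' B) < 1 / 2 := by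
    rw [Real.volume_preimage_mul_left (by positivity)]
    calc ENNReal.ofReal |r⁻¹| * volume B ≤ 2 * volume B := by gcongr
      _ < 2 * (1 / 4) := by gcongr; norm_num
      _ = 1 / 2 := by rw [mul_one_div, ENNReal.div_eq_div_iff] <;> norm_num
  by_contra! h
  have hsub : Icc (1 : ℝ) 2 ⊆ A ∪ (r * ·) ⁻¹' B := fun s hs =>
    (em (s ∈ A)).elim Or.inl fun hsA => Or.inr (h s hs hsA)
  have hle := (measure_mono hsub).trans (measure_union_le (μ := volume) _ _)
  have hlt := ENNReal.add_lt_add hA hP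
  rw [ENNReal.add_halves, ← not_le] at hlt
  norm_num at hle
  exact hlt hle

theorem tendsto_sub_of_slowlyVarying (hL : AEStronglyMeasurable L volume)
    (hSV : ∀ s > 0, Tendsto (fun u => L (u * s) - L u) atTop (𝓝 0))
    {a b : ℕ → ℝ} (ha : Tendsto a atTop atTop)
    (hab : Tendsto (fun n => b n / a n) atTop (𝓝 1)) :
    Tendsto (fun n => L (b n) - L (a n)) atTop (𝓝 0) := by
  have hb : Tendsto b atTop atTop := by
    refine (hab.pos_mul_atTop one_pos ha).congr' ?_
    filter_upwards [ha.eventually_ne_atTop 0] with n hn using div_mul_cancel₀ _ hn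
  set S := Icc (1 / 2 : ℝ) 4
  have hS0 : S ⊆ Ioi 0 := fun s hs => lt_of_lt_of_le (by norm_num) hs.1
  have hSvol : volume S ≠ ⊤ := by simp [S]
  refine Metric.tendsto_nhds.2 fun ε hε => ?_
  have hA := tendsto_volume_le_abs_sub_of_slowlyVarying hL hSV hb measurableSet_Icc hSvol hS0
    (half_pos hε)
  have hB := tendsto_volume_le_abs_sub_of_slowlyVarying hL hSV ha measurableSet_Icc hSvol hS0
    (half_pos hε)
  filter_upwards [hA.eventually (gt_mem_nhds (by norm_num : (0 : ENNReal) < 1 / 2)),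
    hB.eventually (gt_mem_nhds (by norm_num : (0 : ENNReal) < 1 / 4)),
    hab.eventually (Icc_mem_nhds (by norm_num : (1 / 2 : ℝ) < 1) one_lt_two),
    ha.eventually_ne_atTop 0] with n hAn hBn ⟨hr₁, hr₂⟩ han
  -- The bad sets are small, so some `s` is good for `b n` at `s` and for `a n` at
  -- `(b n / a n) * s`; as `a n * ((b n / a n) * s) = b n * s`, the two estimates chain.
  obtain ⟨s, ⟨hs₁, hs₂⟩, hsA, hsB⟩ := exists_mem_Icc_notMem_of_volume_lt hr₁ hAn hBn
  have hsS : s ∈ S := ⟨by linarith, by linarith⟩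
  have hrsS : b n / a n * s ∈ S := ⟨by nlinarith, by nlinarith⟩
  have hmul : a n * (b n / a n * s) = b n * s := by field_simp
  simp only [mem_inter_iff, mem_ofPred_eq, not_and', not_le, hmul] at hsA hsB
  have h₁ := abs_lt.1 (hsA hsS)
  have h₂ := abs_lt.1 (hsB hrsS)
  rw [Real.dist_eq, sub_zero, abs_lt]
  constructor <;> linarith

theorem tendsto_comp_add_sub_of_slowlyVarying (hL : AEStronglyMeasurable L volume)
    (hSV : ∀ s > 0, Tendsto (fun u => L (u * s) - L u) atTop (𝓝 0)) (k : ℝ) :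
    Tendsto (fun t => L (t + k) - L t) atTop (𝓝 0) := by
  have hdiv : Tendsto (fun t : ℝ => (t + k) / t) atTop (𝓝 1) := by
    have : Tendsto (fun t : ℝ => 1 + k / t) atTop (𝓝 (1 + 0)) :=
      tendsto_const_nhds.add (tendsto_const_nhds.div_atTop tendsto_id)
    rw [add_zero] at this
    refine this.congr' ?_
    filter_upwards [eventually_ne_atTop 0] with t ht using one_add_div ht
  exact tendsto_iff_seq_tendsto.2 fun x hx =>
    tendsto_sub_of_slowlyVarying hL hSV hx (hdiv.comp hx)

end UniformConvergence

section Tails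

variable {f : ℝ → ℝ}

theorem setIntegral_Ioi_comp_add_right (x k : ℝ) :
    ∫ t in Ioi x, f (t + k) = ∫ t in Ioi (x + k), f t := by
  have h := (measurePreserving_add_right volume k).setIntegral_preimage_emb
    (MeasurableEquiv.addRight k).measurableEmbedding f (Ioi (x + k))
  rwa [preimage_add_const_Ioi, add_sub_cancel_right] at h

theorem eventually_setIntegral_Ioi_pos (hf : Integrable f) (hpos : ∀ᶠ t in atTop, 0 < f t) :
    ∀ᶠ x in atTop, 0 < ∫ t in Ioi x, f t := by
  obtain ⟨T, hT⟩ := eventually_atTop.1 hpos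
  filter_upwards [eventually_ge_atTop T] with x hx
  have hfx : ∀ t ∈ Ioi x, 0 < f t := fun t ht => hT t (hx.trans ht.le)
  have hsupp : Function.support f ∩ Ioi x = Ioi x :=
    inter_eq_right.2 fun t ht => (hfx t ht).ne'
  rw [setIntegral_pos_iff_support_of_nonneg_ae
    ((ae_restrict_iff' measurableSet_Ioi).2 (ae_of_all _ fun t ht => (hfx t ht).le))
    hf.integrableOn, hsupp, Real.volume_Ioi]
  exact ENNReal.zero_lt_top

theorem eventually_setIntegral_Ioi_le {g₁ g₂ : ℝ → ℝ}
    (h₁ : Integrable g₁) (h₂ : Integrable g₂)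
    (h : ∀ᶠ t in atTop, g₁ t ≤ g₂ t) :
    ∀ᶠ x in atTop, ∫ t in Ioi x, g₁ t ≤ ∫ t in Ioi x, g₂ t := by
  obtain ⟨T, hT⟩ := eventually_atTop.1 h
  filter_upwards [eventually_ge_atTop T] with x hx
  exact setIntegral_mono_on h₁.integrableOn h₂.integrableOn measurableSet_Ioi
    fun t ht => hT t (hx.trans ht.le)

theorem tendsto_setIntegral_Ioi_ratio_of_tendsto_ratio (hf : Integrable f)
    (hpos : ∀ᶠ t in atTop, 0 < f t) {k c : ℝ}
    (h : Tendsto (fun t => f (t + k) / f t) atTop (𝓝 c)) :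
    Tendsto (fun x => (∫ t in Ioi (x + k), f t) / ∫ t in Ioi x, f t) atTop (𝓝 c) := by
  have hshift : Integrable (fun t => f (t + k)) := hf.comp_add_right k
  have hF := eventually_setIntegral_Ioi_pos hf hpos
  refine tendsto_order.2 ⟨fun a hac => ?_, fun b hcb => ?_⟩
  · obtain ⟨a', haa', ha'c⟩ := exists_between hac
    have hle : ∀ᶠ t in atTop, a' * f t ≤ f (t + k) := by
      filter_upwards [h.eventually (lt_mem_nhds ha'c), hpos] with t ht hft
      exact ((lt_div_iff₀ hft).1 ht).le
    filter_upwards [eventually_setIntegral_Ioi_le (hf.const_mul a') hshift hle, hF] with x hx hFx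
    rw [integral_const_mul, setIntegral_Ioi_comp_add_right] at hx
    exact haa'.trans_le ((le_div_iff₀ hFx).2 hx)
  · obtain ⟨b', hcb', hb'b⟩ := exists_between hcb
    have hle : ∀ᶠ t in atTop, f (t + k) ≤ b' * f t := by
      filter_upwards [h.eventually (gt_mem_nhds hcb'), hpos] with t ht hft
      exact ((div_lt_iff₀ hft).1 ht).le
    filter_upwards [eventually_setIntegral_Ioi_le hshift (hf.const_mul b') hle, hF] with x hx hFx
    rw [integral_const_mul, setIntegral_Ioi_comp_add_right] at hx
    exact ((div_le_iff₀ hFx).2 hx).trans_lt hb'b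

end Tails

section GammaType

variable {f C : ℝ → ℝ} {α β : ℝ}

theorem eventually_pos_of_gammaType (hC_pos : ∀ x, 0 < C x)
    (hGamma : Tendsto (fun x => f x / (C x * x ^ α * exp (-β * x))) atTop (𝓝 1)) :
    ∀ᶠ x in atTop, 0 < f x := by
  filter_upwards [hGamma.eventually (lt_mem_nhds one_pos), eventually_gt_atTop 0] with x hx hx0
  exact (div_pos_iff_of_pos_right (by have := hC_pos x; positivity)).1 hx

theorem tendsto_log_sub_log_of_gammaType (hC_pos : ∀ x, 0 < C x)
    (hGamma : Tendsto (fun x => f x / (C x * x ^ α * exp (-β * x))) atTop (𝓝 1)) :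
    Tendsto (fun t => log (f t) - α * log t + β * t - log (C t)) atTop (𝓝 0) := by
  have h := hGamma.log one_ne_zero
  rw [log_one] at h
  refine h.congr' ?_
  filter_upwards [eventually_pos_of_gammaType hC_pos hGamma, eventually_gt_atTop 0] with t hft ht
  have hCt := hC_pos t
  rw [log_div hft.ne' (by positivity), log_mul (by positivity) (exp_pos _).ne',
    log_mul hCt.ne' (by positivity), log_rpow ht, log_exp]
  ring

theorem tendsto_ratio_of_gammaType (hf : AEMeasurable f) (hC_pos : ∀ x, 0 < C x)
    (hC_SV : ∀ x : ℝ, 0 < x → Tendsto (fun t => C (t * x) / C t) atTop (𝓝 1))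
    (hGamma : Tendsto (fun x => f x / (C x * x ^ α * exp (-β * x))) atTop (𝓝 1)) (k : ℝ) :
    Tendsto (fun t => f (t + k) / f t) atTop (𝓝 (exp (-β * k))) := by
  set L : ℝ → ℝ := fun t => log (f t) - α * log t + β * t
  have hL : AEStronglyMeasurable L volume := by
    simp only [L]
    fun_prop
  have hLC := tendsto_log_sub_log_of_gammaType hC_pos hGamma
  have hSV : ∀ s > 0, Tendsto (fun u => L (u * s) - L u) atTop (𝓝 0) := by
    intro s hs
    have hCs : Tendsto (fun u => log (C (u * s)) - log (C u)) atTop (𝓝 0) := by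
      have h := (hC_SV s hs).log one_ne_zero
      rw [log_one] at h
      exact h.congr fun u => log_div (hC_pos _).ne' (hC_pos _).ne'
    have h := ((hLC.comp (tendsto_id.atTop_mul_const hs)).sub hLC).add hCs
    rw [sub_zero, zero_add] at h
    refine h.congr fun u => ?_
    simp only [Function.comp_apply, id, L]
    ring
  have h := ((tendsto_comp_add_sub_of_slowlyVarying hL hSV k).add
    ((tendsto_log_comp_add_sub_log k).const_mul α)).sub_const (β * k)
  rw [mul_zero, add_zero, zero_sub, ← neg_mul] at h
  have hpos := eventually_pos_of_gammaType hC_pos hGamma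
  have hpos_add : ∀ᶠ t in atTop, 0 < f (t + k) :=
    (tendsto_atTop_add_const_right _ k tendsto_id).eventually hpos
  refine h.rexp.congr' ?_
  filter_upwards [hpos, hpos_add] with t hft hftk
  have hlog : L (t + k) - L t + α * (log (t + k) - log t) - β * k
      = log (f (t + k)) - log (f t) := by
    simp only [L]
    ring
  rw [hlog, exp_sub, exp_log hftk, exp_log hft]

end GammaType

theorem gammaType_exponential_tail_general
    (f C : ℝ → ℝ) (α β : ℝ)
    (hf_int : Integrable f)
    (hC_pos : ∀ x, 0 < C x)
    (hC_SV : ∀ x : ℝ, 0 < x → Tendsto (fun t => C (t * x) / C t) atTop (nhds 1))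
    (hGamma : Tendsto (fun x => f x / (C x * x ^ α * Real.exp (-β * x))) atTop (nhds 1)) :
    ∀ k : ℝ,
      Tendsto (fun x => (∫ t in Set.Ioi (x + k), f t) / (∫ t in Set.Ioi x, f t))
        atTop (nhds (Real.exp (-β * k))) := by
  intro k
  exact tendsto_setIntegral_Ioi_ratio_of_tendsto_ratio hf_int
    (eventually_pos_of_gammaType hC_pos hGamma)
    (tendsto_ratio_of_gammaType hf_int.aemeasurable hC_pos hC_SV hGamma k)

/-- A gamma-type density has an exponential tail: the survival function satisfies
`F̄(x+k)/F̄(x) → exp (-β k)` for every `k : ℝ`. -/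
theorem gammaType_exponential_tail
    (f C : ℝ → ℝ) (α β : ℝ) (hβ : 0 < β)
    (hf_nonneg : ∀ x, 0 ≤ f x)
    (hf_supp : ∀ x < 0, f x = 0)
    (hf_int : Integrable f)
    (hf_prob : ∫ x, f x = 1)
    (hC_pos : ∀ x, 0 < C x)
    (hC_locbdd : ∀ r : ℝ, ∃ M : ℝ, ∀ x ∈ Set.Icc (0:ℝ) r, |C x| ≤ M)
    (hC_SV : ∀ x : ℝ, 0 < x → Tendsto (fun t => C (t * x) / C t) atTop (nhds 1))
    (hGamma : Tendsto (fun x => f x / (C x * x ^ α * Real.exp (-β * x))) atTop (nhds 1)) :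
    ∀ k : ℝ,
      Tendsto (fun x => (∫ t in Set.Ioi (x + k), f t) / (∫ t in Set.Ioi x, f t))
        atTop (nhds (Real.exp (-β * k))) :=
  gammaType_exponential_tail_general f C α β hf_int hC_pos hC_SV hGamma
end

section
/- Poisson mixtures are identifiable: if two nonnegative random variables Λ₁ and Λ₂ satisfy E[e^{-Λ₁} Λ₁^n / n!] = E[e^{-Λ₂} Λ₂^n / n!] for all n ∈ ℕ, then Λ₁ and Λ₂ have the same distribution. -/
/-!
Up to the factor `n !`, the mixed Poisson probabilities of a law `μ` on `[0, ∞)` are the Taylor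
coefficients at `-1` of its complex moment generating function `z ↦ ∫ exp (z x) ∂μ`, which is
holomorphic on the half plane `Re z < 0`. By the identity theorem the two transforms agree on that
half plane. Tilting by `exp (-x)` shifts the half plane to `Re z < 1`, which contains the imaginary
axis, so the tilted laws have the same characteristic function; hence they coincide, and
untilting gives `μ₁ = μ₂`.
-/

open Real MeasureTheory ProbabilityTheory

open scoped Nat

theorem AnalyticOnNhd.eqOn_of_preconnected_of_iteratedDeriv_eq {E : Type*}
    [NormedAddCommGroup E] [NormedSpace ℂ E] [CompleteSpace E] {f g : ℂ → E} {U : Set ℂ}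
    (hf : AnalyticOnNhd ℂ f U) (hg : AnalyticOnNhd ℂ g U) (hU : IsOpen U)
    (hU' : IsPreconnected U) {c : ℂ} (hc : c ∈ U)
    (hfg : ∀ n, iteratedDeriv n f c = iteratedDeriv n g c) : Set.EqOn f g U := by
  obtain ⟨r, hr, hball⟩ := Metric.isOpen_iff.mp hU c hc
  refine hf.eqOn_of_preconnected_of_eventuallyEq hg hU' hc ?_
  filter_upwards [Metric.ball_mem_nhds c hr] with z hz
  refine (Complex.hasSum_taylorSeries_on_ball (hf.differentiableOn.mono hball) hz).unique ?_
  simpa only [hfg] using Complex.hasSum_taylorSeries_on_ball (hg.differentiableOn.mono hball) hz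

section

variable {Ω : Type*} {m : MeasurableSpace Ω} {μ : Measure Ω} {X : Ω → ℝ}

lemma Iic_zero_subset_integrableExpSet [IsFiniteMeasure μ] (hXm : AEMeasurable X μ)
    (hX : ∀ᵐ ω ∂μ, 0 ≤ X ω) : Set.Iic 0 ⊆ integrableExpSet X μ := by
  intro t ht
  refine Integrable.of_bound (by fun_prop) 1 ?_
  filter_upwards [hX] with ω hω
  rw [norm_of_nonneg (exp_nonneg _), exp_le_one_iff]
  exact mul_nonpos_of_nonpos_of_nonneg ht hω

lemma Iio_zero_subset_interior_integrableExpSet [IsFiniteMeasure μ] (hXm : AEMeasurable X μ)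
    (hX : ∀ᵐ ω ∂μ, 0 ≤ X ω) : Set.Iio 0 ⊆ interior (integrableExpSet X μ) :=
  interior_Iic (a := (0 : ℝ)) ▸ interior_mono (Iic_zero_subset_integrableExpSet hXm hX)

lemma analyticOnNhd_complexMGF_of_nonneg [IsFiniteMeasure μ] (hXm : AEMeasurable X μ)
    (hX : ∀ᵐ ω ∂μ, 0 ≤ X ω) : AnalyticOnNhd ℂ (complexMGF X μ) {z | z.re < 0} :=
  analyticOnNhd_complexMGF.mono fun _ hz ↦ Iio_zero_subset_interior_integrableExpSet hXm hX hz

lemma complexMGF_tilted_mul (t : ℝ) (z : ℂ) :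
    complexMGF X (μ.tilted (fun ω ↦ t * X ω)) z = complexMGF X μ (z + t) / mgf X μ t := by
  simp only [complexMGF, mgf, integral_tilted, Complex.real_smul]
  rw [← integral_div]
  congr 1 with ω
  push_cast
  rw [add_mul, Complex.exp_add]
  ring

end

section

variable {μ : Measure ℝ} [IsFiniteMeasure μ]

lemma iteratedDeriv_complexMGF_id_neg_one (hμ : ∀ᵐ x ∂μ, 0 ≤ x) (n : ℕ) :
    iteratedDeriv n (complexMGF id μ) (-1)
      = (n ! : ℂ) * ↑(∫ x, exp (-x) * x ^ n / (n ! : ℝ) ∂μ) := by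
  have hmem : (-1 : ℂ).re ∈ interior (integrableExpSet id μ) :=
    Iio_zero_subset_interior_integrableExpSet aemeasurable_id hμ (by norm_num)
  rw [iteratedDeriv_complexMGF hmem, ← integral_complex_ofReal, ← integral_const_mul]
  congr 1 with x
  have : (n ! : ℂ) ≠ 0 := Nat.cast_ne_zero.mpr n.factorial_ne_zero
  push_cast
  field_simp
  simp only [id_eq]
  ring

lemma eqOn_complexMGF_of_poisson_eq {ν : Measure ℝ} [IsFiniteMeasure ν]
    (hμ : ∀ᵐ x ∂μ, 0 ≤ x) (hν : ∀ᵐ x ∂ν, 0 ≤ x)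
    (h : ∀ n : ℕ, ∫ x, exp (-x) * x ^ n / (n ! : ℝ) ∂μ = ∫ x, exp (-x) * x ^ n / (n ! : ℝ) ∂ν) :
    Set.EqOn (complexMGF id μ) (complexMGF id ν) {z | z.re < 0} :=
  (analyticOnNhd_complexMGF_of_nonneg aemeasurable_id hμ).eqOn_of_preconnected_of_iteratedDeriv_eq
    (analyticOnNhd_complexMGF_of_nonneg aemeasurable_id hν)
    (isOpen_lt Complex.continuous_re continuous_const) (convex_halfSpace_re_lt 0).isPreconnected
    (c := -1) (by simp) fun n ↦ by
      rw [iteratedDeriv_complexMGF_id_neg_one hμ, iteratedDeriv_complexMGF_id_neg_one hν, h]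

end

/-- Identifiability of Poisson mixtures: two nonnegative mixing laws producing the same
mixed Poisson point probabilities coincide. -/
theorem poisson_mixture_identifiable
    (μ₁ μ₂ : Measure ℝ) [IsProbabilityMeasure μ₁] [IsProbabilityMeasure μ₂]
    (hnonneg₁ : ∀ᵐ lam ∂μ₁, 0 ≤ lam)
    (hnonneg₂ : ∀ᵐ lam ∂μ₂, 0 ≤ lam)
    (h : ∀ n : ℕ,
      (∫ lam, Real.exp (-lam) * lam ^ n / (Nat.factorial n) ∂μ₁)
        = ∫ lam, Real.exp (-lam) * lam ^ n / (Nat.factorial n) ∂μ₂) :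
    μ₁ = μ₂ := by
  have hexp {μ : Measure ℝ} [IsFiniteMeasure μ] (hμ : ∀ᵐ x ∂μ, 0 ≤ x) :
      Integrable (fun x ↦ exp (-1 * x)) μ :=
    Iic_zero_subset_integrableExpSet aemeasurable_id hμ (by norm_num : (-1 : ℝ) ≤ 0)
  have hmgf : mgf id μ₁ (-1) = mgf id μ₂ (-1) := by simpa [mgf] using h 0
  have hC := eqOn_complexMGF_of_poisson_eq hnonneg₁ hnonneg₂ h
  have htilted : μ₁.tilted (fun x ↦ -1 * x) = μ₂.tilted (fun x ↦ -1 * x) := by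
    refine Measure.ext_of_charFun (funext fun t ↦ ?_)
    rw [← complexMGF_id_mul_I, ← complexMGF_id_mul_I]
    have hshift (μ : Measure ℝ) : complexMGF id (μ.tilted fun x ↦ -1 * x) (t * Complex.I)
        = complexMGF id μ (t * Complex.I + (-1 : ℝ)) / mgf id μ (-1) :=
      complexMGF_tilted_mul (-1) _
    rw [hshift, hshift, hmgf, hC (by simp)]
  rw [← tilted_neg_same (hexp hnonneg₁), htilted, tilted_neg_same (hexp hnonneg₂)]
end

section
/- The negative binomial distribution with parameters a > 0 and success probability q = 1/(b+1) ∈ (0,1) satisfies lim_{n→∞} (1 - F(n+1))/(1 - F(n)) = 1/(1+b) ∈ (0,1); in particular it is not long tailed, confirming that the Poisson-gamma mixture is pseudo-Gumbel. -/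
/-!
With `q = 1 / (b + 1)` we have `p n = (1 - q) ^ a * multichoose a n * q ^ n`, so the masses sum
to `1` by the binomial series of `(1 - q) ^ (-a)`, and `1 - F n` is the tail `∑_{m > n} p m`.
The term ratio `p (n + 1) / p n = q (a + n) / (n + 1)` tends to `q`; once
`l < p (k + 1) / p k < u` for all `k ≥ N`, summing gives the same bounds for the ratio of
consecutive tails, which therefore also tends to `q`.
-/

open Filter Real Topology Polynomial Nat

theorem Real.Gamma_add_nat_eq_ascPochhammer_mul {a : ℝ} (ha : ∀ k : ℕ, a ≠ -k) (n : ℕ) :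
    Gamma (a + n) = (ascPochhammer ℝ n).eval a * Gamma a := by
  induction n with
  | zero => simp
  | succ n ih =>
    have hn : a + n ≠ 0 := fun h => ha n (by linarith)
    rw [Nat.cast_succ, ← add_assoc, Gamma_add_one hn, ih, ascPochhammer_succ_right]
    simp only [eval_mul, eval_add, eval_X, eval_natCast]
    ring

theorem Ring.multichoose_eq_Gamma_div {a : ℝ} (ha : ∀ k : ℕ, a ≠ -k) (n : ℕ) :
    Ring.multichoose a n = Gamma (a + n) / (Gamma a * n !) := by
  rw [Gamma_add_nat_eq_ascPochhammer_mul ha, ← ascPochhammer_smeval_eq_eval,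
    ← factorial_nsmul_multichoose_eq_ascPochhammer, nsmul_eq_mul]
  have := Gamma_ne_zero ha
  field_simp

theorem Real.hasSum_multichoose_mul_pow (a : ℝ) {x : ℝ} (hx : |x| < 1) :
    HasSum (fun n => Ring.multichoose a n * x ^ n) (1 / (1 - x) ^ a) := by
  have hx' : x ∈ Metric.eball (0 : ℝ) 1 := by
    simpa [Metric.mem_eball, edist_dist] using hx
  have := (one_div_one_sub_rpow_hasFPowerSeriesOnBall_zero a).hasSum hx'
  simpa [FormalMultilinearSeries.ofScalars_apply_eq, Ring.multichoose_eq, mul_comm] using this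

theorem tsum_nat_add_lt_tsum_nat_add {f g : ℕ → ℝ} (hf : Summable f) (hg : Summable g)
    (h : ∀ᶠ k in atTop, f k < g k) : ∀ᶠ n in atTop, ∑' m, f (m + n) < ∑' m, g (m + n) := by
  obtain ⟨N, hN⟩ := eventually_atTop.1 h
  filter_upwards [eventually_ge_atTop N] with n hn
  have hlt : ∀ m, f (m + n) < g (m + n) := fun m => hN _ (by omega)
  exact Summable.tsum_lt_tsum (fun m => (hlt m).le) (hlt 0)
    ((summable_nat_add_iff n).2 hf) ((summable_nat_add_iff n).2 hg)

theorem tendsto_tsum_nat_add_succ_div_of_tendsto_ratio {p : ℕ → ℝ} {L : ℝ}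
    (hpos : ∀ n, 0 < p n) (hp : Summable p)
    (h : Tendsto (fun n => p (n + 1) / p n) atTop (𝓝 L)) :
    Tendsto (fun n => (∑' m, p (m + (n + 1))) / ∑' m, p (m + n)) atTop (𝓝 L) := by
  have hshift : Summable fun k => p (k + 1) := (summable_nat_add_iff 1).2 hp
  have htail_pos : ∀ n, 0 < ∑' m, p (m + n) := fun n =>
    ((summable_nat_add_iff n).2 hp).tsum_pos (fun m => (hpos _).le) 0 (hpos _)
  refine tendsto_order.2 ⟨fun l hl => ?_, fun u hu => ?_⟩
  · have hterm : ∀ᶠ k in atTop, l * p k < p (k + 1) :=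
      (h.eventually (lt_mem_nhds hl)).mono fun k hk => (lt_div_iff₀ (hpos k)).1 hk
    filter_upwards [tsum_nat_add_lt_tsum_nat_add (hp.mul_left l) hshift hterm] with n hn
    rw [tsum_mul_left] at hn
    exact (lt_div_iff₀ (htail_pos n)).2 hn
  · have hterm : ∀ᶠ k in atTop, p (k + 1) < u * p k :=
      (h.eventually (gt_mem_nhds hu)).mono fun k hk => (div_lt_iff₀ (hpos k)).1 hk
    filter_upwards [tsum_nat_add_lt_tsum_nat_add hshift (hp.mul_left u) hterm] with n hn
    rw [tsum_mul_left] at hn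
    exact (div_lt_iff₀ (htail_pos n)).2 hn

noncomputable def negBinomialWeight (a q : ℝ) (n : ℕ) : ℝ :=
  Gamma (a + n) / (Gamma a * n !) * (1 - q) ^ a * q ^ n

theorem hasSum_negBinomialWeight {a q : ℝ} (ha : ∀ k : ℕ, a ≠ -k) (hq : |q| < 1) :
    HasSum (negBinomialWeight a q) 1 := by
  have h1q : 0 < 1 - q := by linarith [(abs_lt.1 hq).2]
  have := (hasSum_multichoose_mul_pow a hq).mul_left ((1 - q) ^ a)
  rw [mul_one_div_cancel (rpow_pos_of_pos h1q a).ne'] at this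
  refine this.congr_fun fun n => ?_
  rw [negBinomialWeight, Ring.multichoose_eq_Gamma_div ha]
  ring

theorem negBinomialWeight_pos {a q : ℝ} (ha : 0 < a) (hq₀ : 0 < q) (hq₁ : q < 1) (n : ℕ) :
    0 < negBinomialWeight a q n := by
  have := Gamma_pos_of_pos ha
  have := Gamma_pos_of_pos (add_pos_of_pos_of_nonneg ha n.cast_nonneg)
  have := rpow_pos_of_pos (sub_pos.2 hq₁) a
  unfold negBinomialWeight
  positivity

theorem negBinomialWeight_succ {a : ℝ} (ha : ∀ k : ℕ, a ≠ -k) (q : ℝ) (n : ℕ) :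
    negBinomialWeight a q (n + 1) = q * (a + n) / (n + 1) * negBinomialWeight a q n := by
  have hn : a + n ≠ 0 := fun h => ha n (by linarith)
  have := Gamma_ne_zero ha
  simp only [negBinomialWeight, Nat.cast_succ, ← add_assoc, Gamma_add_one hn, factorial_succ,
    Nat.cast_mul]
  field_simp
  ring

theorem tendsto_negBinomialWeight_succ_div {a q : ℝ} (ha : 0 < a) (hq₀ : 0 < q) (hq₁ : q < 1) :
    Tendsto (fun n => negBinomialWeight a q (n + 1) / negBinomialWeight a q n) atTop (𝓝 q) := by
  have ha' : ∀ k : ℕ, a ≠ -k := fun k => by linarith [k.cast_nonneg (α := ℝ)]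
  have := tendsto_add_mul_div_add_mul_atTop_nhds (q * a) 1 q one_ne_zero
  rw [div_one] at this
  refine this.congr fun n => ?_
  rw [negBinomialWeight_succ ha', mul_div_cancel_right₀ _ (negBinomialWeight_pos ha hq₀ hq₁ n).ne']
  ring

/-- The negative binomial distribution is pseudo-Gumbel: the ratio of consecutive tails
converges to `1/(1+b) ∈ (0,1)`, so it is not long tailed. -/
theorem negative_binomial_pseudo_gumbel
    (a b : ℝ) (ha : 0 < a) (hb : 0 < b)
    (p : ℕ → ℝ) (F : ℕ → ℝ)
    (hp : ∀ n, p n = (Real.Gamma (a + n) / (Real.Gamma a * Nat.factorial n))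
            * (b / (b + 1)) ^ a * (1 / (b + 1)) ^ n)
    (hF : ∀ n, F n = ∑ m ∈ Finset.range (n + 1), p m) :
    Tendsto (fun n => (1 - F (n + 1)) / (1 - F n)) atTop (nhds (1 / (1 + b))) ∧
    (1 / (1 + b)) ∈ Set.Ioo (0:ℝ) 1 ∧
    ¬ Tendsto (fun n => (1 - F (n + 1)) / (1 - F n)) atTop (nhds 1) := by
  set q : ℝ := 1 / (1 + b)
  have hq : q ∈ Set.Ioo (0 : ℝ) 1 := ⟨by positivity, (div_lt_one (by positivity)).2 (by linarith)⟩
  have h1q : 1 - q = b / (1 + b) := by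
    simp only [q]
    field_simp
    ring
  have hpq : p = negBinomialWeight a q := by
    ext n
    rw [hp, negBinomialWeight, h1q, add_comm b]
  have hsum : HasSum p 1 := hpq ▸ hasSum_negBinomialWeight
    (fun k => by linarith [k.cast_nonneg (α := ℝ)]) (abs_lt.2 ⟨by linarith [hq.1], hq.2⟩)
  have htail : ∀ n, 1 - F n = ∑' m, p (m + (n + 1)) := fun n => by
    rw [hF, ← hsum.tsum_eq, ← hsum.summable.sum_add_tsum_nat_add (n + 1), add_sub_cancel_left]
  have hratio : Tendsto (fun n => (1 - F (n + 1)) / (1 - F n)) atTop (𝓝 q) := by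
    simp only [htail]
    refine (tendsto_tsum_nat_add_succ_div_of_tendsto_ratio ?_ hsum.summable ?_).comp
      (tendsto_add_atTop_nat 1)
    · exact hpq ▸ negBinomialWeight_pos ha hq.1 hq.2
    · exact hpq ▸ tendsto_negBinomialWeight_succ_div ha hq.1 hq.2
  exact ⟨hratio, hq, fun h1 => hq.2.ne (tendsto_nhds_unique hratio h1)⟩
end
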